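/- arXiv:2502.04749 — 2 statements merged into one kernel-verified Lean document; each statement's English description precedes it below -/
import Mathlib

section
/- Let d ≥ 2, let L ≥ 1 be the number of users with user ℓ contributing m_ℓ ≥ 1 samples, let U > 0 and ε > 0, and let T be the ⌈2d/ε⌉-th largest value of the multiset {U·m_1, …, U·m_L} (with T := 0 if ⌈2d/ε⌉ > L). Then the clipping strategy defined by a_j^{(ℓ)} := 0 and b_j^{(ℓ)} := min{T/m_ℓ, U} for all ℓ ∈ [L], j ∈ [m_ℓ] is admissible (0 ≤ a_j^{(ℓ)} ≤ b_j^{(ℓ)} ≤ U) and minimizes the worst-case error functional E^{(d)} over all admissible clipping strategies: for every admissible family {a_j^{(ℓ)}, b_j^{(ℓ)}}, E^{(d)}({a_j^{(ℓ)}, b_j^{(ℓ)}}) is at least the value of E^{(d)} at this strategy. -/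
open Finset

noncomputable def kthLargest {L : ℕ} (v : Fin L → ℝ) (k : ℕ) : ℝ :=
  (((Finset.univ.val.map v).sort (· ≤ ·)).reverse).getD (k - 1) 0

/-- An admissible clipping strategy: `0 ≤ a ℓ j ≤ b ℓ j ≤ U` for every user `ℓ`
and sample index `j`. -/
def Admissible {L : ℕ} (m : Fin L → ℕ) (U : ℝ)
    (a b : (ℓ : Fin L) → Fin (m ℓ) → ℝ) : Prop :=
  ∀ ℓ j, 0 ≤ a ℓ j ∧ a ℓ j ≤ b ℓ j ∧ b ℓ j ≤ U

/-- The worst-case error functional `E^(d)` of a clipping strategy (dimension `d ≥ 2`). -/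
noncomputable def Ed {L : ℕ} (d : ℕ) (m : Fin L → ℕ) (U ε : ℝ)
    (a b : (ℓ : Fin L) → Fin (m ℓ) → ℝ) : ℝ :=
  (1 / ∑ ℓ, (m ℓ : ℝ)) *
    ((∑ ℓ, ∑ j, max (a ℓ j) (U - b ℓ j)) +
      (2 * (d : ℝ) / ε) * sSup (Set.range fun ℓ => ∑ j, b ℓ j))

/-!
Only the per-user totals `∑ⱼ bⱼ` matter: with `S` the largest of them and `vℓ = U·mℓ`, user `ℓ`
loses at least `max (vℓ - S) 0`, so `M·E ≥ ∑ℓ max (vℓ - S) 0 + c·S` with `c = 2d/ε`, and the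
proposed strategy attains this bound with `S = T`. The right-hand side is convex and piecewise
linear in `S` with slope `c - #{ℓ | S < vℓ}`, and the `⌈c⌉`-th largest `vℓ` is exactly where this
slope changes sign.
-/

section ClipLoss

variable {ι : Type*} [Fintype ι]

/-- `M · E^(d)` of clipping each user's total mass `vᵢ` at the threshold `S`, where `c = 2d/ε`. -/
def clipLoss (v : ι → ℝ) (c S : ℝ) : ℝ :=
  ∑ i, max (v i - S) 0 + c * S

theorem clipLoss_le_of_le {v : ι → ℝ} {c T S : ℝ} (hTS : T ≤ S)
    (hc : (#{i | T < v i} : ℝ) ≤ c) : clipLoss v c T ≤ clipLoss v c S := by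
  have hpt : ∀ i, max (v i - T) 0 ≤ max (v i - S) 0 + if T < v i then S - T else 0 := by
    intro i
    split_ifs with h
    · exact max_le (by linarith [le_max_left (v i - S) 0]) (by linarith [le_max_right (v i - S) 0])
    · exact max_le (by linarith [le_max_right (v i - S) 0, not_lt.1 h]) (by simp)
  have hsum := sum_le_sum fun i (_ : i ∈ univ) => hpt i
  rw [sum_add_distrib, ← sum_filter, sum_const, nsmul_eq_mul] at hsum
  unfold clipLoss
  linarith [mul_le_mul_of_nonneg_right hc (sub_nonneg.2 hTS)]

theorem clipLoss_le_of_ge {v : ι → ℝ} {c T S : ℝ} (hST : S ≤ T)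
    (hc : c ≤ (#{i | T ≤ v i} : ℝ)) : clipLoss v c T ≤ clipLoss v c S := by
  have hpt : ∀ i, max (v i - T) 0 + (if T ≤ v i then T - S else 0) ≤ max (v i - S) 0 := by
    intro i
    split_ifs with h
    · rw [max_eq_left (sub_nonneg.2 h)]
      linarith [le_max_left (v i - S) 0]
    · rw [add_zero]
      exact max_le_max (by linarith) le_rfl
  have hsum := sum_le_sum fun i (_ : i ∈ univ) => hpt i
  rw [sum_add_distrib, ← sum_filter, sum_const, nsmul_eq_mul] at hsum
  unfold clipLoss
  linarith [mul_le_mul_of_nonneg_right hc (sub_nonneg.2 hST)]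

end ClipLoss

namespace List.Pairwise

variable {α : Type*} [LinearOrder α] {r : List α} {i : ℕ}

theorem countP_getElem_lt_le (hr : r.Pairwise (· ≥ ·)) (hi : i < r.length) :
    r.countP (fun x => r[i] < x) ≤ i := by
  have hdrop : (r.drop i).countP (fun x => r[i] < x) = 0 := by
    have hsorted := hr.sublist (List.drop_sublist i r)
    rw [List.drop_eq_getElem_cons hi] at hsorted
    rw [List.countP_eq_zero, List.drop_eq_getElem_cons hi]
    intro x hx
    simp only [decide_eq_true_eq, not_lt]
    rcases List.mem_cons.1 hx with rfl | hx
    · exact le_rfl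
    · exact List.rel_of_pairwise_cons hsorted hx
  calc r.countP (fun x => r[i] < x)
      = (r.take i).countP (fun x => r[i] < x) + (r.drop i).countP (fun x => r[i] < x) := by
        rw [← List.countP_append, List.take_append_drop]
    _ ≤ (r.take i).length := by rw [hdrop, add_zero]; exact List.countP_le_length
    _ ≤ i := List.length_take_le _ _

theorem succ_le_countP_getElem_le (hr : r.Pairwise (· ≥ ·)) (hi : i < r.length) :
    i + 1 ≤ r.countP (fun x => r[i] ≤ x) := by
  have hprefix : ∀ x ∈ r.take (i + 1), r[i] ≤ x := by
    have hsorted := hr.sublist (List.take_sublist (i + 1) r)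
    rw [← List.take_concat_get' r i hi] at hsorted ⊢
    intro x hx
    rcases List.mem_append.1 hx with hx | hx
    · exact (List.pairwise_append.1 hsorted).2.2 x hx r[i] (List.mem_singleton_self _)
    · rw [List.mem_singleton.1 hx]
  refine le_trans ?_ (List.take_sublist (i + 1) r).countP_le
  rw [List.countP_eq_length.2 (by simpa using hprefix)]
  simp [List.length_take, hi]

end List.Pairwise

section KthLargest

variable {L : ℕ} (v : Fin L → ℝ)

noncomputable def sortedDesc : List ℝ :=
  ((univ.val.map v).sort (· ≤ ·)).reverse

theorem kthLargest_eq_getD (k : ℕ) : kthLargest v k = (sortedDesc v).getD (k - 1) 0 := rfl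

theorem pairwise_sortedDesc : (sortedDesc v).Pairwise (· ≥ ·) :=
  List.pairwise_reverse.2 (Multiset.pairwise_sort _ _)

@[simp]
theorem length_sortedDesc : (sortedDesc v).length = L := by
  simp [sortedDesc]

theorem mem_sortedDesc {x : ℝ} : x ∈ sortedDesc v ↔ ∃ ℓ, v ℓ = x := by
  simp [sortedDesc]

theorem card_filter_eq_countP_sortedDesc (p : ℝ → Prop) [DecidablePred p] :
    #{ℓ | p (v ℓ)} = (sortedDesc v).countP (fun x => decide (p x)) := by
  rw [sortedDesc, List.countP_reverse, ← Multiset.coe_countP, Multiset.sort_eq,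
    Multiset.countP_map]
  rfl

variable {v}

theorem kthLargest_nonneg (hv : ∀ ℓ, 0 ≤ v ℓ) (k : ℕ) : 0 ≤ kthLargest v k := by
  rw [kthLargest_eq_getD, List.getD_eq_getElem?_getD]
  cases hx : (sortedDesc v)[k - 1]? with
  | none => exact le_rfl
  | some x =>
    obtain ⟨ℓ, rfl⟩ := (mem_sortedDesc v).1 (List.mem_of_getElem? hx)
    exact hv ℓ

theorem kthLargest_of_lt {k : ℕ} (hLk : L < k) : kthLargest v k = 0 :=
  List.getD_eq_default _ _ (by simp; omega)

theorem kthLargest_eq_getElem {k : ℕ} (hk : 1 ≤ k) (hkL : k ≤ L) :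
    kthLargest v k = (sortedDesc v)[k - 1]'(by simp; omega) :=
  List.getD_eq_getElem _ _ _

theorem card_filter_kthLargest_lt_lt {k : ℕ} (hk : 1 ≤ k) : #{ℓ | kthLargest v k < v ℓ} < k := by
  by_cases hkL : k ≤ L
  · rw [card_filter_eq_countP_sortedDesc v (kthLargest v k < ·), kthLargest_eq_getElem hk hkL]
    have := (pairwise_sortedDesc v).countP_getElem_lt_le (i := k - 1) (by simp; omega)
    omega
  · calc #{ℓ | kthLargest v k < v ℓ} ≤ #(univ : Finset (Fin L)) := card_filter_le _ _
      _ < k := by simp; omega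

theorem le_card_filter_kthLargest_le {k : ℕ} (hkL : k ≤ L) : k ≤ #{ℓ | kthLargest v k ≤ v ℓ} := by
  rcases Nat.eq_zero_or_pos k with rfl | hk
  · exact Nat.zero_le _
  rw [card_filter_eq_countP_sortedDesc v (kthLargest v k ≤ ·), kthLargest_eq_getElem hk hkL]
  have := (pairwise_sortedDesc v).succ_le_countP_getElem_le (i := k - 1) (by simp; omega)
  omega

theorem clipLoss_kthLargest_ceil_le {c S : ℝ} (hc : 0 < c) (hS : 0 ≤ S) :
    clipLoss v c (kthLargest v ⌈c⌉₊) ≤ clipLoss v c S := by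
  rcases le_total (kthLargest v ⌈c⌉₊) S with hTS | hST
  · exact clipLoss_le_of_le hTS
      (Nat.lt_ceil.1 (card_filter_kthLargest_lt_lt (Nat.one_le_ceil_iff.2 hc))).le
  · by_cases hkL : ⌈c⌉₊ ≤ L
    · exact clipLoss_le_of_ge hST
        ((Nat.le_ceil c).trans (by exact_mod_cast le_card_filter_kthLargest_le hkL))
    · rw [le_antisymm hST (kthLargest_of_lt (not_le.1 hkL) ▸ hS)]

end KthLargest

theorem sum_const_min_div {T : ℝ} (n : ℕ) (U : ℝ) (hT : 0 ≤ T) :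
    ∑ _j : Fin n, min (T / n) U = min T (U * n) := by
  rw [sum_const, card_univ, Fintype.card_fin, nsmul_eq_mul]
  rcases Nat.eq_zero_or_pos n with rfl | hn
  · simp [hT]
  · have hn : (0 : ℝ) < n := by exact_mod_cast hn
    rw [mul_min_of_nonneg _ _ hn.le, mul_div_cancel₀ _ hn.ne', mul_comm]

theorem sum_max_sub_min_div {T : ℝ} (n : ℕ) (U : ℝ) (hT : 0 ≤ T) :
    ∑ _j : Fin n, max 0 (U - min (T / n) U) = max (U * n - T) 0 := by
  simp_rw [max_eq_right (sub_nonneg.2 (min_le_right _ U))]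
  rw [sum_sub_distrib, sum_const_min_div n U hT, sum_const, card_univ, Fintype.card_fin,
    nsmul_eq_mul, mul_comm]
  rcases le_total T (U * n) with h | h
  · rw [min_eq_left h, max_eq_left (sub_nonneg.2 h)]
  · rw [min_eq_right h, max_eq_right (sub_nonpos.2 h), sub_self]

section Strategy

variable {L : ℕ} (d : ℕ) (m : Fin L → ℕ) {U : ℝ} (ε : ℝ) {T : ℝ}

theorem admissible_clip (hU : 0 ≤ U) (hT : 0 ≤ T) :
    Admissible m U (fun _ _ => 0) (fun ℓ _ => min (T / m ℓ) U) :=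
  fun _ _ => ⟨le_rfl, le_min (by positivity) hU, min_le_right _ _⟩

theorem Ed_clip_le (hc : 0 ≤ 2 * (d : ℝ) / ε) (hT : 0 ≤ T) :
    Ed d m U ε (fun _ _ => 0) (fun ℓ _ => min (T / m ℓ) U) ≤
      (1 / ∑ ℓ, (m ℓ : ℝ)) * clipLoss (fun ℓ => U * m ℓ) (2 * d / ε) T := by
  unfold Ed clipLoss
  gcongr ?_ * (?_ + _ * ?_)
  · exact (sum_congr rfl fun ℓ _ => sum_max_sub_min_div (m ℓ) U hT).le
  · refine Real.sSup_le ?_ hT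
    rintro _ ⟨ℓ, rfl⟩
    beta_reduce
    rw [sum_const_min_div (m ℓ) U hT]
    exact min_le_left _ _

theorem clipLoss_le_Ed {a b : (ℓ : Fin L) → Fin (m ℓ) → ℝ} (ha : ∀ ℓ j, 0 ≤ a ℓ j) :
    (1 / ∑ ℓ, (m ℓ : ℝ)) *
        clipLoss (fun ℓ => U * m ℓ) (2 * d / ε) (sSup (Set.range fun ℓ => ∑ j, b ℓ j)) ≤
      Ed d m U ε a b := by
  unfold Ed clipLoss
  gcongr with ℓ
  refine max_le ?_ (sum_nonneg fun j _ => (ha ℓ j).trans (le_max_left _ _))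
  have hb : ∑ j, b ℓ j ≤ sSup (Set.range fun ℓ => ∑ j, b ℓ j) :=
    le_csSup (Set.finite_range _).bddAbove ⟨ℓ, rfl⟩
  calc U * m ℓ - sSup (Set.range fun ℓ => ∑ j, b ℓ j) ≤ ∑ j, (U - b ℓ j) := by
        rw [sum_sub_distrib, sum_const, card_univ, Fintype.card_fin, nsmul_eq_mul, mul_comm]
        linarith
    _ ≤ ∑ j, max (a ℓ j) (U - b ℓ j) := sum_le_sum fun j _ => le_max_right _ _

end Strategy

theorem stmt1_general {d L : ℕ} (hd : 2 ≤ d) (m : Fin L → ℕ)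
    (U ε : ℝ) (hU : 0 < U) (hε : 0 < ε)
    (T : ℝ) (hT : T = kthLargest (fun ℓ => U * (m ℓ : ℝ)) ⌈(2 * (d : ℝ)) / ε⌉₊) :
    Admissible m U (fun _ _ => (0 : ℝ)) (fun ℓ _ => min (T / (m ℓ : ℝ)) U) ∧
    ∀ a b, Admissible m U a b →
      Ed d m U ε (fun _ _ => (0 : ℝ)) (fun ℓ _ => min (T / (m ℓ : ℝ)) U) ≤ Ed d m U ε a b := by
  have hd_pos : (0 : ℝ) < d := by exact_mod_cast (by omega : 0 < d)
  have hc : 0 < 2 * (d : ℝ) / ε := by positivity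
  have hT0 : 0 ≤ T := hT ▸ kthLargest_nonneg (fun ℓ => by positivity) _
  refine ⟨admissible_clip m hU.le hT0, fun a b hab => ?_⟩
  have hS : 0 ≤ sSup (Set.range fun ℓ => ∑ j, b ℓ j) := by
    refine Real.sSup_nonneg ?_
    rintro _ ⟨ℓ, rfl⟩
    exact sum_nonneg fun j _ => (hab ℓ j).1.trans (hab ℓ j).2.1
  calc _ ≤ _ := Ed_clip_le d m ε hc.le hT0
    _ ≤ _ := by
        gcongr
        exact hT ▸ clipLoss_kthLargest_ceil_le hc hS
    _ ≤ _ := clipLoss_le_Ed d m ε fun ℓ j => (hab ℓ j).1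

/-- Theorem 2 of the paper, case `d ≥ 2`.
With `T` the `⌈2d/ε⌉`-th largest value of `{U·m_1, …, U·m_L}` (and `T = 0` if `⌈2d/ε⌉ > L`),
the strategy `a_j^{(ℓ)} = 0`, `b_j^{(ℓ)} = min{T/m_ℓ, U}` is admissible and minimizes
`E^(d)` over all admissible clipping strategies. -/
theorem stmt1 {d L : ℕ} (hd : 2 ≤ d) (hL : 0 < L) (m : Fin L → ℕ) (hm : ∀ ℓ, 1 ≤ m ℓ)
    (U ε : ℝ) (hU : 0 < U) (hε : 0 < ε)
    (T : ℝ) (hT : T = kthLargest (fun ℓ => U * (m ℓ : ℝ)) ⌈(2 * (d : ℝ)) / ε⌉₊) :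
    Admissible m U (fun _ _ => (0 : ℝ)) (fun ℓ _ => min (T / (m ℓ : ℝ)) U) ∧
    ∀ a b, Admissible m U a b →
      Ed d m U ε (fun _ _ => (0 : ℝ)) (fun ℓ _ => min (T / (m ℓ : ℝ)) U) ≤ Ed d m U ε a b :=
  stmt1_general hd m U ε hU hε T hT
end

section
/- Let d ≥ 1, L ≥ 1, m_ℓ ≥ 1 for ℓ ∈ [L], M := ∑_ℓ m_ℓ, U > 0, and let {a_j^{(ℓ)}, b_j^{(ℓ)} : ℓ ∈ [L], j ∈ [m_ℓ]} be an admissible clipping strategy (0 ≤ a_j^{(ℓ)} ≤ b_j^{(ℓ)} ≤ U). Then the worst-case total clipping bias satisfies: sup over all datasets {x_j^{(ℓ)} ∈ Δ_U : ℓ ∈ [L], j ∈ [m_ℓ]} of (1/M)·∑_{ℓ≤L} ∑_{j≤m_ℓ} dist₁(x_j^{(ℓ)}, A_{a_j^{(ℓ)}, b_j^{(ℓ)}}) equals (1/M)·∑_{ℓ≤L} ∑_{j≤m_ℓ} max{a_j^{(ℓ)}, U − b_j^{(ℓ)}}, and the supremum is attained. -/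
/-! The `ℓ1`-distance from a nonnegative `x` to `A_{α,β}` only depends on the mass `s = ∑ᵢ xᵢ`:
mass can be added on one coordinate or removed by scaling `x` at `ℓ1`-cost `|s - t|`, while
`|∑ᵢ xᵢ - ∑ᵢ yᵢ| ≤ ‖x - y‖₁` shows nothing cheaper exists. So `dist₁(x, A_{α,β})` is the distance
from `s` to `[α, β]`, a convex function of `s ∈ [0, U]`; its maximum `max(α, U - β)` is attained at
`s = 0` or `s = U`, and the summands of the bias can be maximised independently. -/

open Finset

/-- The simplex `Δ_M ⊆ ℝ^d`: nonnegative coordinates summing to at most `M`. -/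
def simplex (d : ℕ) (M : ℝ) : Set (Fin d → ℝ) :=
  {x | (∀ i, 0 ≤ x i) ∧ ∑ i, x i ≤ M}

/-- The face `δ_M ⊆ ℝ^d`: nonnegative coordinates summing to exactly `M`. -/
def face (d : ℕ) (M : ℝ) : Set (Fin d → ℝ) :=
  {x | (∀ i, 0 ≤ x i) ∧ ∑ i, x i = M}

/-- The annulus `A_{α,β} ⊆ ℝ^d`: nonnegative coordinates with sum in `[α, β]`. -/
def annulus (d : ℕ) (α β : ℝ) : Set (Fin d → ℝ) :=
  {x | (∀ i, 0 ≤ x i) ∧ α ≤ ∑ i, x i ∧ ∑ i, x i ≤ β}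

/-- The `ℓ1`-distance from a point `x ∈ ℝ^d` to a set `S ⊆ ℝ^d`. -/
noncomputable def dist1 {d : ℕ} (x : Fin d → ℝ) (S : Set (Fin d → ℝ)) : ℝ :=
  sInf ((fun y => ∑ i, |x i - y i|) '' S)

lemma exists_nonneg_sum_eq_of_sum_le {d : ℕ} (hd : 0 < d) {x : Fin d → ℝ}
    (hx : ∀ i, 0 ≤ x i) {t : ℝ} (hst : ∑ i, x i ≤ t) :
    ∃ y : Fin d → ℝ, (∀ i, 0 ≤ y i) ∧ ∑ i, y i = t ∧ ∑ i, |x i - y i| = t - ∑ i, x i := by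
  have hsingle : 0 ≤ (Pi.single (⟨0, hd⟩ : Fin d) (t - ∑ i, x i) : Fin d → ℝ) :=
    Pi.single_nonneg.2 (sub_nonneg.2 hst)
  refine ⟨x + Pi.single ⟨0, hd⟩ (t - ∑ i, x i), fun i => add_nonneg (hx i) (hsingle i), ?_, ?_⟩
  · simp [sum_add_distrib]
  · simp [abs_of_nonneg (hsingle _)]

lemma exists_nonneg_sum_eq_of_le_sum {d : ℕ} {x : Fin d → ℝ} (hx : ∀ i, 0 ≤ x i) {t : ℝ}
    (ht : 0 ≤ t) (hts : t ≤ ∑ i, x i) :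
    ∃ y : Fin d → ℝ, (∀ i, 0 ≤ y i) ∧ ∑ i, y i = t ∧ ∑ i, |x i - y i| = ∑ i, x i - t := by
  set s := ∑ i, x i
  have hs : 0 ≤ s := ht.trans hts
  have hmass : t / s * s = t := by
    rcases hs.eq_or_lt with h | h
    · simp [← h, le_antisymm (h ▸ hts) ht]
    · exact div_mul_cancel₀ t h.ne'
  have hr : t / s ≤ 1 := div_le_one_of_le₀ hts hs
  refine ⟨fun i => t / s * x i, fun i => mul_nonneg (div_nonneg ht hs) (hx i),
    by rw [← mul_sum, hmass], ?_⟩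
  have hterm : ∀ i, |x i - t / s * x i| = (1 - t / s) * x i := fun i => by
    rw [← one_sub_mul, abs_of_nonneg (mul_nonneg (sub_nonneg.2 hr) (hx i))]
  rw [sum_congr rfl fun i _ => hterm i, ← mul_sum, sub_mul, one_mul, hmass]

lemma exists_nonneg_sum_eq {d : ℕ} (hd : 0 < d) {x : Fin d → ℝ} (hx : ∀ i, 0 ≤ x i) {t : ℝ}
    (ht : 0 ≤ t) :
    ∃ y : Fin d → ℝ, (∀ i, 0 ≤ y i) ∧ ∑ i, y i = t ∧ ∑ i, |x i - y i| = |∑ i, x i - t| := by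
  rcases le_total (∑ i, x i) t with hst | hts
  · rw [abs_of_nonpos (sub_nonpos.2 hst), neg_sub]
    exact exists_nonneg_sum_eq_of_sum_le hd hx hst
  · rw [abs_of_nonneg (sub_nonneg.2 hts)]
    exact exists_nonneg_sum_eq_of_le_sum hx ht hts

lemma dist1_le_of_mem {d : ℕ} {x y : Fin d → ℝ} {S : Set (Fin d → ℝ)} (hy : y ∈ S) :
    dist1 x S ≤ ∑ i, |x i - y i| :=
  csInf_le ⟨0, by rintro _ ⟨z, -, rfl⟩; positivity⟩ ⟨y, hy, rfl⟩

lemma dist1_annulus {d : ℕ} (hd : 0 < d) {x : Fin d → ℝ} (hx : ∀ i, 0 ≤ x i) {α β : ℝ}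
    (hα : 0 ≤ α) (hαβ : α ≤ β) :
    dist1 x (annulus d α β) = max (α - ∑ i, x i) (max (∑ i, x i - β) 0) := by
  set s := ∑ i, x i
  -- the nearest admissible mass is `s` clamped to `[α, β]`
  obtain ⟨y, hy0, hys, hyx⟩ :=
    exists_nonneg_sum_eq hd hx (t := max α (min s β)) (hα.trans (le_max_left _ _))
  have hy : y ∈ annulus d α β :=
    ⟨hy0, hys ▸ le_max_left _ _, hys ▸ max_le hαβ (min_le_right _ _)⟩
  apply le_antisymm
  · refine (dist1_le_of_mem hy).trans (hyx.trans_le (abs_le.2 ⟨?_, ?_⟩)) <;>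
      simp only [max_def, min_def] <;> split_ifs <;> linarith
  · refine le_csInf ⟨_, y, hy, rfl⟩ ?_
    rintro _ ⟨z, ⟨-, hzα, hzβ⟩, rfl⟩
    have hsum : |s - ∑ i, z i| ≤ ∑ i, |x i - z i| := by
      rw [← sum_sub_distrib]; exact abs_sum_le_sum_abs _ _
    refine le_trans ?_ hsum
    refine max_le ?_ (max_le ?_ (abs_nonneg _)) <;>
      linarith [neg_abs_le (s - ∑ i, z i), le_abs_self (s - ∑ i, z i)]

lemma dist1_annulus_le_of_mem_simplex {d : ℕ} (hd : 0 < d) {U α β : ℝ} (hα : 0 ≤ α)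
    (hαβ : α ≤ β) {x : Fin d → ℝ} (hx : x ∈ simplex d U) :
    dist1 x (annulus d α β) ≤ max α (U - β) := by
  have hs : 0 ≤ ∑ i, x i := sum_nonneg fun i _ => hx.1 i
  rw [dist1_annulus hd hx.1 hα hαβ]
  exact max_le (le_max_of_le_left (by linarith))
    (max_le (le_max_of_le_right (by linarith [hx.2])) (le_max_of_le_left hα))

lemma exists_mem_simplex_dist1_annulus_eq {d : ℕ} (hd : 0 < d) {U α β : ℝ} (hα : 0 ≤ α)
    (hαβ : α ≤ β) (hβU : β ≤ U) :
    ∃ x ∈ simplex d U, dist1 x (annulus d α β) = max α (U - β) := by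
  rcases le_total (U - β) α with h | h
  · refine ⟨0, ⟨fun _ => le_rfl, by simp; linarith⟩, ?_⟩
    rw [dist1_annulus hd (x := 0) (fun _ => le_rfl) hα hαβ]
    simp only [Pi.zero_apply, sum_const_zero, sub_zero, zero_sub]
    rw [max_eq_left h, max_eq_left (max_le (by linarith) hα)]
  · obtain ⟨x, hx0, hxU, -⟩ :=
      exists_nonneg_sum_eq hd (x := 0) (fun _ => le_rfl) (t := U) (by linarith)
    refine ⟨x, ⟨hx0, hxU.le⟩, ?_⟩
    rw [dist1_annulus hd hx0 hα hαβ, hxU, max_eq_right h]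
    simp only [max_def]; split_ifs <;> linarith

theorem stmt15_general {d L : ℕ} (hd : 0 < d) (m : Fin L → ℕ)
    (U : ℝ) (a b : (ℓ : Fin L) → Fin (m ℓ) → ℝ)
    (hab : Admissible m U a b) :
    IsGreatest {e : ℝ | ∃ x : (ℓ : Fin L) → Fin (m ℓ) → Fin d → ℝ,
        (∀ ℓ j, x ℓ j ∈ simplex d U) ∧
        e = (1 / ∑ ℓ, (m ℓ : ℝ)) *
              ∑ ℓ, ∑ j, dist1 (x ℓ j) (annulus d (a ℓ j) (b ℓ j))}
      ((1 / ∑ ℓ, (m ℓ : ℝ)) * ∑ ℓ, ∑ j, max (a ℓ j) (U - b ℓ j)) := by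
  constructor
  · choose x hx hdist using fun ℓ j =>
      exists_mem_simplex_dist1_annulus_eq hd (hab ℓ j).1 (hab ℓ j).2.1 (hab ℓ j).2.2
    exact ⟨x, hx, by simp only [hdist]⟩
  · rintro e ⟨x, hx, rfl⟩
    gcongr with ℓ _ j _
    exact dist1_annulus_le_of_mem_simplex hd (hab ℓ j).1 (hab ℓ j).2.1 (hx ℓ j)

/-- Lemma 4 of the paper: the worst-case bias.
For an admissible clipping strategy, the supremum over all datasets
`{x_j^{(ℓ)} ∈ Δ_U}` of `(1/M)·∑_ℓ ∑_j dist₁(x_j^{(ℓ)}, A_{a_j^{(ℓ)}, b_j^{(ℓ)}})` equals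
`(1/M)·∑_ℓ ∑_j max{a_j^{(ℓ)}, U − b_j^{(ℓ)}}`, and the supremum is attained. -/
theorem stmt15 {d L : ℕ} (hd : 0 < d) (hL : 0 < L) (m : Fin L → ℕ) (hm : ∀ ℓ, 1 ≤ m ℓ)
    (U : ℝ) (hU : 0 < U) (a b : (ℓ : Fin L) → Fin (m ℓ) → ℝ)
    (hab : Admissible m U a b) :
    IsGreatest {e : ℝ | ∃ x : (ℓ : Fin L) → Fin (m ℓ) → Fin d → ℝ,
        (∀ ℓ j, x ℓ j ∈ simplex d U) ∧
        e = (1 / ∑ ℓ, (m ℓ : ℝ)) *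
              ∑ ℓ, ∑ j, dist1 (x ℓ j) (annulus d (a ℓ j) (b ℓ j))}
      ((1 / ∑ ℓ, (m ℓ : ℝ)) * ∑ ℓ, ∑ j, max (a ℓ j) (U - b ℓ j)) :=
  stmt15_general hd m U a b hab
end
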